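/- Let N ≥ 1 and let ψ, φ : ℝ → ℂ be such that t ↦ t^k·ψ(t) and t ↦ t^k·φ(t) are integrable for 0 ≤ k ≤ N-1, and suppose 𝓕φ(ω) = -i·sgn(ω)·𝓕ψ(ω) for every ω ∈ ℝ (i.e., φ is a Hilbert transform pair of ψ). If ∫ℝ t^k·ψ(t) dt = 0 for every k with 0 ≤ k ≤ N-1, then the analytic wavelet g(t) = (1/√2)·(ψ(t) + i·φ(t)) has N vanishing moments: ∫ℝ t^k·g(t) dt = 0 for every k with 0 ≤ k ≤ N-1. (Analytic wavelets have the same null moments as their generating wavelet.) -/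

import Mathlib

/-!
The `k`-th moment of `f` is, up to the factor `(-2πi)^k`, the `k`-th derivative of `𝓕 f` at `0`,
and a derivative at `0` only sees `𝓕 f` on the half-line `[0, ∞)`. There the Hilbert pair
relation reads `𝓕 φ = -i • 𝓕 ψ` (at `ω = 0` because `𝓕 ψ 0 = ∫ ψ = 0`), so the moments of `φ` are
`-i` times those of `ψ`, hence vanish, and so do those of `(ψ + iφ)/√2`.
-/

open MeasureTheory FourierTransform Complex Set
open scoped Real

theorem iteratedDeriv_eq_of_eqOn_Ici {E : Type*} [NormedAddCommGroup E] [NormedSpace ℝ E]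
    {f g : ℝ → E} {a : ℝ} {k : ℕ} (hf : ContDiffAt ℝ k f a) (hg : ContDiffAt ℝ k g a)
    (hfg : EqOn f g (Ici a)) : iteratedDeriv k f a = iteratedDeriv k g a := by
  rw [← iteratedDerivWithin_eq_iteratedDeriv (uniqueDiffOn_Ici a) hf self_mem_Ici,
    ← iteratedDerivWithin_eq_iteratedDeriv (uniqueDiffOn_Ici a) hg self_mem_Ici]
  exact iteratedDerivWithin_congr hfg self_mem_Ici

section Moments

variable {f : ℝ → ℂ} {N : ℕ}

theorem contDiff_fourier_of_integrable_pow_mul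
    (hf : ∀ n ≤ N, Integrable (fun t : ℝ => (t : ℂ) ^ n * f t)) :
    ContDiff ℝ N (𝓕 f) :=
  Real.contDiff_fourier fun n hn => by
    simpa [norm_mul] using (hf n (by exact_mod_cast hn)).norm

theorem iteratedDeriv_fourier_zero
    (hf : ∀ n ≤ N, Integrable (fun t : ℝ => (t : ℂ) ^ n * f t)) {k : ℕ} (hk : k ≤ N) :
    iteratedDeriv k (𝓕 f) 0 = (-2 * π * I) ^ k * ∫ t : ℝ, (t : ℂ) ^ k * f t := by
  have hf' : ∀ n : ℕ, (n : ℕ∞) ≤ N → Integrable (fun t : ℝ => t ^ n • f t) :=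
    fun n hn => by simpa [Complex.real_smul] using hf n (by exact_mod_cast hn)
  rw [Real.iteratedDeriv_fourier hf' (by exact_mod_cast hk), Real.fourier_real_eq,
    ← integral_const_mul]
  congr 1 with t
  simp only [mul_zero, neg_zero, AddChar.map_zero_eq_one, one_smul, smul_eq_mul]
  ring

end Moments

theorem integral_pow_mul_eq_of_fourier_eqOn_Ici {ψ φ : ℝ → ℂ} {N : ℕ} (c : ℂ)
    (hψ : ∀ n ≤ N, Integrable (fun t : ℝ => (t : ℂ) ^ n * ψ t))
    (hφ : ∀ n ≤ N, Integrable (fun t : ℝ => (t : ℂ) ^ n * φ t))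
    (hc : EqOn (𝓕 φ) (c • 𝓕 ψ) (Ici 0)) {k : ℕ} (hk : k ≤ N) :
    ∫ t : ℝ, (t : ℂ) ^ k * φ t = c * ∫ t : ℝ, (t : ℂ) ^ k * ψ t := by
  have hdiff := iteratedDeriv_eq_of_eqOn_Ici
    ((contDiff_fourier_of_integrable_pow_mul hφ).of_le (by exact_mod_cast hk)).contDiffAt
    (((contDiff_fourier_of_integrable_pow_mul hψ).of_le (by exact_mod_cast hk)).const_smul
      c).contDiffAt hc
  rw [iteratedDeriv_fun_const_smul_field, iteratedDeriv_fourier_zero hφ hk,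
    iteratedDeriv_fourier_zero hψ hk, smul_eq_mul, mul_left_comm] at hdiff
  exact mul_left_cancel₀ (pow_ne_zero _ (by simp [Real.pi_ne_zero])) hdiff

theorem stmt_17_general (N : ℕ) (ψ φ : ℝ → ℂ)
    (hψ : ∀ k : ℕ, k ≤ N - 1 → Integrable (fun t : ℝ => (t : ℂ) ^ k * ψ t))
    (hφ : ∀ k : ℕ, k ≤ N - 1 → Integrable (fun t : ℝ => (t : ℂ) ^ k * φ t))
    (h : ∀ ω : ℝ, 𝓕 φ ω = -Complex.I * (Real.sign ω : ℂ) * 𝓕 ψ ω)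
    (hm : ∀ k : ℕ, k ≤ N - 1 → ∫ t : ℝ, (t : ℂ) ^ k * ψ t = 0) :
    ∀ k : ℕ, k ≤ N - 1 →
      ∫ t : ℝ, (t : ℂ) ^ k * ((1 / Real.sqrt 2 : ℂ) * (ψ t + Complex.I * φ t)) = 0 := by
  have hψ0 : 𝓕 ψ 0 = 0 := by simpa [Real.fourier_real_eq] using hm 0 (Nat.zero_le _)
  have hfourier : EqOn (𝓕 φ) ((-I) • 𝓕 ψ) (Ici 0) := by
    intro ω hω
    rcases (mem_Ici.1 hω).eq_or_lt with rfl | hpos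
    · simp [h, hψ0]
    · simp [h ω, Real.sign_of_pos hpos]
  intro k hk
  have hmφ : ∫ t : ℝ, (t : ℂ) ^ k * φ t = 0 := by
    rw [integral_pow_mul_eq_of_fourier_eqOn_Ici (-I) hψ hφ hfourier hk, hm k hk, mul_zero]
  have hsplit : ∀ t : ℝ, (t : ℂ) ^ k * ((1 / Real.sqrt 2 : ℂ) * (ψ t + I * φ t))
      = (1 / Real.sqrt 2 : ℂ) * ((t : ℂ) ^ k * ψ t)
        + (1 / Real.sqrt 2 * I) * ((t : ℂ) ^ k * φ t) :=
    fun t => by ring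
  simp_rw [hsplit]
  rw [integral_add ((hψ k hk).const_mul _) ((hφ k hk).const_mul _), integral_const_mul,
    integral_const_mul, hm k hk, hmφ, mul_zero, mul_zero, add_zero]

/-- Analytic wavelets have the same vanishing moments as their generating
wavelet: the analytic wavelet `(1/√2)·(ψ + i·φ)` has `N` vanishing moments. -/
theorem stmt_17 (N : ℕ) (hN : 1 ≤ N) (ψ φ : ℝ → ℂ)
    (hψ : ∀ k : ℕ, k ≤ N - 1 → Integrable (fun t : ℝ => (t : ℂ) ^ k * ψ t))
    (hφ : ∀ k : ℕ, k ≤ N - 1 → Integrable (fun t : ℝ => (t : ℂ) ^ k * φ t))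
    (h : ∀ ω : ℝ, 𝓕 φ ω = -Complex.I * (Real.sign ω : ℂ) * 𝓕 ψ ω)
    (hm : ∀ k : ℕ, k ≤ N - 1 → ∫ t : ℝ, (t : ℂ) ^ k * ψ t = 0) :
    ∀ k : ℕ, k ≤ N - 1 →
      ∫ t : ℝ, (t : ℂ) ^ k * ((1 / Real.sqrt 2 : ℂ) * (ψ t + Complex.I * φ t)) = 0 :=
  stmt_17_general N ψ φ hψ hφ h hm
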